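/- Every member D of BT(n_1,...,n_{2k}) with n_i ≥ 2k-1 for all i and k ≥ 2 contains k-1 vertex-disjoint directed cycles of which k-2 are 4-cycles and one is a 6-cycle. -/
import Mathlib


/-- `c : ZMod m → V` is a directed cycle of length `m` (arcs `c i → c (i+1)`). -/
def IsCycleOn {V : Type*} (A : V → V → Prop) (m : ℕ) (c : ZMod m → V) : Prop :=
  2 ≤ m ∧ Function.Injective c ∧ ∀ i : ZMod m, A (c i) (c (i + 1))

/-- A family of `k` pairwise vertex-disjoint directed cycles, of lengths `m i`. -/
def DisjointCycles {V : Type*} (A : V → V → Prop) (k : ℕ) (m : Fin k → ℕ)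
    (c : ∀ i : Fin k, ZMod (m i) → V) : Prop :=
  (∀ i, IsCycleOn A (m i) (c i)) ∧
    ∀ i j, i ≠ j → Disjoint (Set.range (c i)) (Set.range (c j))

/-- The digraph with arc relation `A` has `k` pairwise vertex-disjoint directed cycles. -/
def HasKDisjointCycles {V : Type*} (A : V → V → Prop) (k : ℕ) : Prop :=
  ∃ (m : Fin k → ℕ) (c : ∀ i, ZMod (m i) → V), DisjointCycles A k m c

/-- The digraph with arc relation `A` has `k` pairwise vertex-disjoint directed triangles. -/
def HasKDisjointTriangles {V : Type*} (A : V → V → Prop) (k : ℕ) : Prop :=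
  ∃ c : ∀ _ : Fin k, ZMod 3 → V, DisjointCycles A k (fun _ => 3) c

/-- `A` is (the arc relation of) a multipartite tournament with partition map `p`. -/
structure IsMultipartiteTournament {V ι : Type*} (A : V → V → Prop) (p : V → ι) : Prop where
  not_adj_same : ∀ x y, p x = p y → ¬ A x y
  total : ∀ x y, p x ≠ p y → A x y ∨ A y x
  asymm : ∀ x y, A x y → ¬ A y x

/-- Every vertex has out-degree at least `d`. -/
def MinOutDegreeAtLeast {V : Type*} (A : V → V → Prop) (d : ℕ) : Prop :=
  ∀ v : V, d ≤ Nat.card {u : V // A v u}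

/-- `S` is a strong component of the digraph with arc relation `A`. -/
def IsStrongComponent {V : Type*} (A : V → V → Prop) (S : Set V) : Prop :=
  ∃ x : V, S = {y | Relation.ReflTransGen A x y ∧ Relation.ReflTransGen A y x}

/-- `S` is the terminal strong component: a strong component with no arcs leaving it. -/
def IsTerminalComponent {V : Type*} (A : V → V → Prop) (S : Set V) : Prop :=
  IsStrongComponent A S ∧ ∀ a ∈ S, ∀ b, A a b → b ∈ S

/-- The subdigraph induced on `S` is a member of `BT(n 0, …, n (2k-1))`: a bipartite
tournament with partite sets `X = X₀ ∪ ⋯ ∪ X_{2k-1}` (`|Xᵢ| = n i`) and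
`Y = {y₀, …, y_{2k-1}}`, whose arcs are all arcs from `Xᵢ` to `yⱼ` for `i ≠ j`
together with all arcs from `yᵢ` to `Xᵢ`. -/
def MemBT {V : Type*} (A : V → V → Prop) (S : Set V) (k : ℕ) (n : Fin (2 * k) → ℕ) : Prop :=
  ∃ (X : Fin (2 * k) → Set V) (y : Fin (2 * k) → V),
    (∀ i, Nat.card (X i) = n i) ∧
    (∀ i j, i ≠ j → Disjoint (X i) (X j)) ∧
    Function.Injective y ∧
    (∀ i j, y i ∉ X j) ∧
    S = (⋃ i, X i) ∪ Set.range y ∧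
    ∀ a ∈ S, ∀ b ∈ S,
      (A a b ↔ (∃ i j, i ≠ j ∧ a ∈ X i ∧ b = y j) ∨ (∃ i, a = y i ∧ b ∈ X i))

theorem aux_isCycle {V : Type*} (A : V → V → Prop) (m : ℕ) (hm : 2 ≤ m) (g : ℕ → V)
    (hinj : ∀ s t, s < m → t < m → g s = g t → s = t)
    (harc : ∀ t, t < m → A (g t) (g ((t + 1) % m))) :
    IsCycleOn A m (fun z : ZMod m => g z.val) := by
  haveI : NeZero m := ⟨by omega⟩
  haveI : Fact (1 < m) := ⟨by omega⟩
  refine ⟨hm, ?_, ?_⟩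
  · intro z w h
    exact ZMod.val_injective m (hinj _ _ (ZMod.val_lt z) (ZMod.val_lt w) h)
  · intro z
    have h1 : (z + 1).val = (z.val + 1) % m := by
      rw [ZMod.val_add, ZMod.val_one]
    show A (g z.val) (g (z + 1).val)
    rw [h1]
    exact harc _ (ZMod.val_lt z)

theorem aux_disj {V : Type*} {m₁ m₂ : ℕ} (h₁ : 0 < m₁) (h₂ : 0 < m₂) (g₁ g₂ : ℕ → V)
    (h : ∀ s t, s < m₁ → t < m₂ → g₁ s ≠ g₂ t) :
    Disjoint (Set.range (fun z : ZMod m₁ => g₁ z.val))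
      (Set.range (fun z : ZMod m₂ => g₂ z.val)) := by
  haveI : NeZero m₁ := ⟨by omega⟩
  haveI : NeZero m₂ := ⟨by omega⟩
  rw [Set.disjoint_left]
  rintro v ⟨z, rfl⟩ ⟨w, hw⟩
  exact h _ _ (ZMod.val_lt z) (ZMod.val_lt w) hw.symm

/-- Every member of `BT(n₁, …, n_{2k})` with all `nᵢ ≥ 2k-1` and `k ≥ 2` contains `k-1`
vertex-disjoint directed cycles of which `k-2` are 4-cycles and one is a 6-cycle. -/
theorem stmt_13 {V : Type*} [Fintype V] (A : V → V → Prop) (k : ℕ) (hk : 2 ≤ k)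
    (n : Fin (2 * k) → ℕ) (hn : ∀ i, 2 * k - 1 ≤ n i)
    (hBT : MemBT A Set.univ k n) :
    ∃ (m : Fin (k - 1) → ℕ) (c : ∀ i, ZMod (m i) → V),
      DisjointCycles A (k - 1) m c ∧
      ∃ i₀, m i₀ = 6 ∧ ∀ i, i ≠ i₀ → m i = 4 := by
  obtain ⟨X, y, hcard, hdisj, hyinj, hynx, -, hA⟩ := hBT
  have h2k : 0 < 2 * k := by omega
  have hXne : ∀ i, ∃ v, v ∈ X i := by
    intro i
    have h1 : Nat.card (X i) ≠ 0 := by rw [hcard i]; have := hn i; omega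
    have h2 : Nonempty (X i) := (Nat.card_ne_zero.mp h1).1
    exact nonempty_subtype.mp h2
  choose xx hxx using hXne
  have harc1 : ∀ s t : Fin (2 * k), s ≠ t → A (xx s) (y t) := fun s t h =>
    (hA _ trivial _ trivial).2 (Or.inl ⟨s, t, h, hxx s, rfl⟩)
  have harc2 : ∀ s : Fin (2 * k), A (y s) (xx s) := fun s =>
    (hA _ trivial _ trivial).2 (Or.inr ⟨s, rfl, hxx s⟩)
  have hxxinj : ∀ s t, xx s = xx t → s = t := by
    intro s t h
    by_contra hne
    exact Set.disjoint_left.mp (hdisj s t hne) (hxx s) (h ▸ hxx t)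
  have hxy : ∀ s t, xx s ≠ y t := fun s t h => hynx t s (h ▸ hxx s)
  set cl : ℕ → Fin (2 * k) := fun t => ⟨t % (2 * k), Nat.mod_lt _ h2k⟩ with hcl_def
  have hclval : ∀ t, t < 2 * k → (cl t : ℕ) = t := by
    intro t ht
    simp [hcl_def, Nat.mod_eq_of_lt ht]
  set i₀ : Fin (k - 1) := ⟨k - 2, by omega⟩ with hi0_def
  set m : Fin (k - 1) → ℕ := fun i => if i = i₀ then 6 else 4 with hm_def
  set g : Fin (k - 1) → ℕ → V := fun i t =>
    if i = i₀ then
      (if t = 0 then xx (cl 0) else if t = 1 then y (cl 1) else if t = 2 then xx (cl 1)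
        else if t = 3 then y (cl 2) else if t = 4 then xx (cl 2) else y (cl 0))
    else
      (if t = 0 then xx (cl (2 * (i : ℕ) + 3)) else if t = 1 then y (cl (2 * (i : ℕ) + 4))
        else if t = 2 then xx (cl (2 * (i : ℕ) + 4)) else y (cl (2 * (i : ℕ) + 3))) with hg_def
  have hbound : ∀ i : Fin (k - 1), i ≠ i₀ → 2 * (i : ℕ) + 4 < 2 * k := by
    intro i hi
    have h1 : (i : ℕ) < k - 1 := i.isLt
    have h2 : (i : ℕ) ≠ k - 2 := fun e => hi (Fin.ext (by simp [hi0_def, e]))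
    omega
  have hmle : ∀ i, 2 ≤ m i := by
    intro i
    simp only [hm_def]
    split <;> omega
  refine ⟨m, fun i z => g i z.val, ⟨?_, ?_⟩, i₀, by simp [hm_def], fun i hi => by simp [hm_def, hi]⟩
  · -- each is a cycle
    intro i
    refine aux_isCycle A (m i) (hmle i) (g i) ?_ ?_
    · -- injectivity on [0, m i)
      intro s t hs ht h
      by_cases hi : i = i₀
      · have hmi : m i = 6 := by simp [hm_def, hi]
        rw [hmi] at hs ht
        simp only [hg_def, hi, if_pos] at h
        interval_cases s <;> interval_cases t <;>
          simp only [reduceIte, OfNat.ofNat_ne_zero, OfNat.ofNat_ne_one] at h ⊢ <;>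
          first
          | rfl
          | (exact absurd h (hxy _ _))
          | (exact absurd h.symm (hxy _ _))
          | (have h2 := congrArg Fin.val (hxxinj _ _ h)
             rw [hclval _ (by omega), hclval _ (by omega)] at h2
             omega)
          | (have h2 := congrArg Fin.val (hyinj h)
             rw [hclval _ (by omega), hclval _ (by omega)] at h2
             omega)
      · have hmi : m i = 4 := by simp [hm_def, hi]
        have hb := hbound i hi
        rw [hmi] at hs ht
        simp only [hg_def, if_neg hi] at h
        interval_cases s <;> interval_cases t <;>
          simp only [reduceIte, OfNat.ofNat_ne_zero, OfNat.ofNat_ne_one] at h ⊢ <;>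
          first
          | rfl
          | (exact absurd h (hxy _ _))
          | (exact absurd h.symm (hxy _ _))
          | (have h2 := congrArg Fin.val (hxxinj _ _ h)
             rw [hclval _ (by omega), hclval _ (by omega)] at h2
             omega)
          | (have h2 := congrArg Fin.val (hyinj h)
             rw [hclval _ (by omega), hclval _ (by omega)] at h2
             omega)
    · -- arcs
      intro t ht
      by_cases hi : i = i₀
      · have hmi : m i = 6 := by simp [hm_def, hi]
        rw [hmi] at ht ⊢
        simp only [hg_def, hi, if_pos]
        interval_cases t <;> norm_num <;>
          first
          | (exact harc2 _)
          | (refine harc1 _ _ fun e => ?_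
             have h2 := congrArg Fin.val e
             rw [hclval _ (by omega), hclval _ (by omega)] at h2
             omega)
      · have hmi : m i = 4 := by simp [hm_def, hi]
        have hb := hbound i hi
        rw [hmi] at ht ⊢
        simp only [hg_def, if_neg hi]
        interval_cases t <;> norm_num <;>
          first
          | (exact harc2 _)
          | (refine harc1 _ _ fun e => ?_
             have h2 := congrArg Fin.val e
             rw [hclval _ (by omega), hclval _ (by omega)] at h2
             omega)
  · -- disjointness
    intro i j hij
    have hijv : (i : ℕ) ≠ (j : ℕ) := fun e => hij (Fin.ext e)
    refine aux_disj (by have := hmle i; omega) (by have := hmle j; omega) (g i) (g j) ?_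
    intro s t hs ht h
    by_cases hi : i = i₀ <;> by_cases hj : j = i₀
    · exact hij (hi.trans hj.symm)
    · have hmi : m i = 6 := by simp [hm_def, hi]
      have hmj : m j = 4 := by simp [hm_def, hj]
      have hb := hbound j hj
      rw [hmi] at hs; rw [hmj] at ht
      simp only [hg_def, hi, if_pos, if_neg hj] at h
      interval_cases s <;> interval_cases t <;>
        simp only [reduceIte, OfNat.ofNat_ne_zero, OfNat.ofNat_ne_one] at h <;>
        first
        | (exact absurd h (hxy _ _))
        | (exact absurd h.symm (hxy _ _))
        | (have h2 := congrArg Fin.val (hxxinj _ _ h)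
           rw [hclval _ (by omega), hclval _ (by omega)] at h2
           omega)
        | (have h2 := congrArg Fin.val (hyinj h)
           rw [hclval _ (by omega), hclval _ (by omega)] at h2
           omega)
    · have hmi : m i = 4 := by simp [hm_def, hi]
      have hmj : m j = 6 := by simp [hm_def, hj]
      have hb := hbound i hi
      rw [hmi] at hs; rw [hmj] at ht
      simp only [hg_def, hj, if_pos, if_neg hi] at h
      interval_cases s <;> interval_cases t <;>
        simp only [reduceIte, OfNat.ofNat_ne_zero, OfNat.ofNat_ne_one] at h <;>
        first
        | (exact absurd h (hxy _ _))
        | (exact absurd h.symm (hxy _ _))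
        | (have h2 := congrArg Fin.val (hxxinj _ _ h)
           rw [hclval _ (by omega), hclval _ (by omega)] at h2
           omega)
        | (have h2 := congrArg Fin.val (hyinj h)
           rw [hclval _ (by omega), hclval _ (by omega)] at h2
           omega)
    · have hmi : m i = 4 := by simp [hm_def, hi]
      have hmj : m j = 4 := by simp [hm_def, hj]
      have hbi := hbound i hi
      have hbj := hbound j hj
      rw [hmi] at hs; rw [hmj] at ht
      simp only [hg_def, if_neg hi, if_neg hj] at h
      interval_cases s <;> interval_cases t <;>
        simp only [reduceIte, OfNat.ofNat_ne_zero, OfNat.ofNat_ne_one] at h <;>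
        first
        | (exact absurd h (hxy _ _))
        | (exact absurd h.symm (hxy _ _))
        | (have h2 := congrArg Fin.val (hxxinj _ _ h)
           rw [hclval _ (by omega), hclval _ (by omega)] at h2
           omega)
        | (have h2 := congrArg Fin.val (hyinj h)
           rw [hclval _ (by omega), hclval _ (by omega)] at h2
           omega)
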